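/- Let F = ℂ⟨α, β⟩ be the free (noncommutative) algebra on two generators, and let ℤ/2 act on F by the algebra automorphism interchanging α and β. Then the invariant subalgebra F^{ℤ/2} is not finitely generated as a ℂ-algebra. -/
import Mathlib

open Polynomial Matrix

/-- The swap automorphism of the free algebra `ℂ⟨α, β⟩` interchanging the two generators. -/
noncomputable def swapAlg : FreeAlgebra ℂ (Fin 2) →ₐ[ℂ] FreeAlgebra ℂ (Fin 2) :=
  FreeAlgebra.lift ℂ fun i => FreeAlgebra.ι ℂ (1 - i)

namespace NotFGProof

abbrev F := FreeAlgebra ℂ (Fin 2)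
abbrev Mat := Matrix (Fin 3) (Fin 3) (Polynomial ℂ)

noncomputable def N : Mat := !![0,1,0; 0,0,1; 0,0,0]
noncomputable def D0 : Mat := Matrix.diagonal ![0, Polynomial.X, 0]
noncomputable def G : Mat := Matrix.diagonal ![1, -1, 1]
noncomputable def A : Mat := (2⁻¹ : ℂ) • (D0 + N)
noncomputable def B : Mat := (2⁻¹ : ℂ) • (D0 - N)

noncomputable def Ψ : F →ₐ[ℂ] Mat := FreeAlgebra.lift ℂ ![A, B]

lemma G_mul_G : G * G = 1 := by
  ext i j : 2
  rw [G, Matrix.diagonal_mul_diagonal]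
  fin_cases i <;> fin_cases j <;>
    simp [Matrix.diagonal_apply, Matrix.one_apply]

lemma G_D0_G : G * D0 * G = D0 := by
  ext i j : 2
  rw [G, D0, Matrix.diagonal_mul_diagonal, Matrix.diagonal_mul_diagonal]
  fin_cases i <;> fin_cases j <;>
    simp [Matrix.diagonal_apply]

lemma G_N_G : G * N * G = -N := by
  ext i j : 2
  rw [G, Matrix.mul_diagonal, Matrix.diagonal_mul]
  fin_cases i <;> fin_cases j <;>
    simp [N, Matrix.vecHead, Matrix.vecTail]

lemma NMN (M : Mat) : (N * M * N) 0 2 = M 1 1 := by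
  simp [N, Matrix.mul_apply, Fin.sum_univ_three, Matrix.vecMul, Matrix.vecHead,
    Matrix.vecTail, dotProduct]

lemma Psi0 : Ψ (FreeAlgebra.ι ℂ 0) = A := by simp [Ψ]
lemma Psi1 : Ψ (FreeAlgebra.ι ℂ 1) = B := by simp [Ψ]

lemma G_A_G : G * A * G = B := by
  rw [A, B, Matrix.mul_smul, Matrix.smul_mul]
  rw [mul_add, add_mul, G_D0_G, G_N_G, sub_eq_add_neg]

lemma G_B_G : G * B * G = A := by
  rw [A, B, Matrix.mul_smul, Matrix.smul_mul]
  rw [sub_eq_add_neg, mul_add, add_mul, G_D0_G, mul_neg, neg_mul, G_N_G, neg_neg]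

lemma A_sub_B : A - B = N := by
  rw [A, B, ← smul_sub]
  have h : (D0 + N) - (D0 - N) = (2:ℂ) • N := by
    rw [two_smul]; abel
  rw [h, smul_smul]
  norm_num

lemma A_add_B : A + B = D0 := by
  rw [A, B, ← smul_add]
  have h : (D0 + N) + (D0 - N) = (2:ℂ) • D0 := by
    rw [two_smul]; abel
  rw [h, smul_smul]
  norm_num

lemma swap_comm (f : F) : Ψ (swapAlg f) = G * Ψ f * G := by
  induction f using FreeAlgebra.induction with
  | grade0 r =>
      rw [AlgHom.commutes, AlgHom.commutes, Algebra.algebraMap_eq_smul_one,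
        Matrix.mul_smul, Matrix.smul_mul, mul_one, G_mul_G]
  | grade1 x =>
      fin_cases x
      · show Ψ (swapAlg (FreeAlgebra.ι ℂ 0)) = G * Ψ (FreeAlgebra.ι ℂ 0) * G
        rw [show swapAlg (FreeAlgebra.ι ℂ 0) = FreeAlgebra.ι ℂ 1 by
          simp [swapAlg]]
        rw [Psi0, Psi1, G_A_G]
      · show Ψ (swapAlg (FreeAlgebra.ι ℂ 1)) = G * Ψ (FreeAlgebra.ι ℂ 1) * G
        rw [show swapAlg (FreeAlgebra.ι ℂ 1) = FreeAlgebra.ι ℂ 0 by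
          simp [swapAlg]]
        rw [Psi0, Psi1, G_B_G]
  | mul a b ha hb =>
      rw [_root_.map_mul, _root_.map_mul, ha, hb]
      have h : G * Ψ a * G * (G * Ψ b * G) = G * Ψ a * (G * G) * (Ψ b * G) := by
        noncomm_ring
      rw [h, G_mul_G, mul_one, _root_.map_mul]
      noncomm_ring
  | add a b ha hb =>
      simp only [_root_.map_add, ha, hb, mul_add, add_mul]

lemma GMG01 (M : Mat) : (G * M * G) 0 1 = -(M 0 1) := by
  rw [G, Matrix.mul_diagonal, Matrix.diagonal_mul]
  simp [Matrix.vecHead, Matrix.vecTail]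

lemma GMG12 (M : Mat) : (G * M * G) 1 2 = -(M 1 2) := by
  rw [G, Matrix.mul_diagonal, Matrix.diagonal_mul]
  simp [Matrix.vecHead, Matrix.vecTail]

def Q (M : Mat) : Prop :=
  M 1 0 = 0 ∧ M 2 0 = 0 ∧ M 2 1 = 0 ∧ ∃ c : ℂ, M 0 0 = C c ∧ M 2 2 = C c

lemma Q_A : Q A := by
  refine ⟨?_, ?_, ?_, 0, ?_, ?_⟩ <;>
    simp [A, D0, N, Matrix.diagonal_apply, Matrix.vecHead, Matrix.vecTail]

lemma Q_B : Q B := by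
  refine ⟨?_, ?_, ?_, 0, ?_, ?_⟩ <;>
    simp [B, D0, N, Matrix.diagonal_apply, Matrix.vecHead, Matrix.vecTail]

lemma Q_all (f : F) : Q (Ψ f) := by
  induction f using FreeAlgebra.induction with
  | grade0 r =>
      refine ⟨?_, ?_, ?_, r, ?_, ?_⟩ <;>
        simp [AlgHom.commutes, Matrix.algebraMap_matrix_apply, Polynomial.algebraMap_eq]
  | grade1 x =>
      fin_cases x
      · show Q (Ψ (FreeAlgebra.ι ℂ 0)); rw [Psi0]; exact Q_A
      · show Q (Ψ (FreeAlgebra.ι ℂ 1)); rw [Psi1]; exact Q_B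
  | mul a b ha hb =>
      obtain ⟨ha1, ha2, ha3, c, hc1, hc2⟩ := ha
      obtain ⟨hb1, hb2, hb3, c', hc1', hc2'⟩ := hb
      rw [Q, _root_.map_mul]
      refine ⟨?_, ?_, ?_, c * c', ?_, ?_⟩ <;>
        simp [Matrix.mul_apply, Fin.sum_univ_three, ha1, ha2, ha3, hb1, hb2, hb3,
          hc1, hc2, hc1', hc2', Polynomial.C_mul]
  | add a b ha hb =>
      obtain ⟨ha1, ha2, ha3, c, hc1, hc2⟩ := ha
      obtain ⟨hb1, hb2, hb3, c', hc1', hc2'⟩ := hb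
      rw [Q, _root_.map_add]
      refine ⟨?_, ?_, ?_, c + c', ?_, ?_⟩ <;>
        simp [ha1, ha2, ha3, hb1, hb2, hb3, hc1, hc2, hc1', hc2', Polynomial.C_add]

noncomputable def T (D : ℕ) : Subalgebra ℂ F where
  carrier := {f | Ψ f 0 1 = 0 ∧ Ψ f 1 2 = 0 ∧ (Ψ f 0 2).degree ≤ (D : WithBot ℕ)}
  algebraMap_mem' r := by
    refine ⟨?_, ?_, ?_⟩ <;>
      simp [AlgHom.commutes, Matrix.algebraMap_matrix_apply]
  zero_mem' := by
    refine ⟨?_, ?_, ?_⟩ <;> simp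
  one_mem' := by
    refine ⟨?_, ?_, ?_⟩ <;> simp [Matrix.one_apply]
  add_mem' := by
    rintro a b ⟨ha1, ha2, ha3⟩ ⟨hb1, hb2, hb3⟩
    rw [Set.mem_setOf_eq, _root_.map_add]
    refine ⟨by simp [ha1, hb1], by simp [ha2, hb2], ?_⟩
    simp only [Matrix.add_apply]
    exact (Polynomial.degree_add_le _ _).trans (max_le ha3 hb3)
  mul_mem' := by
    rintro a b ⟨ha1, ha2, ha3⟩ ⟨hb1, hb2, hb3⟩
    obtain ⟨qa1, qa2, qa3, c, hc1, hc2⟩ := Q_all a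
    obtain ⟨qb1, qb2, qb3, c', hc1', hc2'⟩ := Q_all b
    rw [Set.mem_setOf_eq, _root_.map_mul]
    refine ⟨?_, ?_, ?_⟩
    · simp [Matrix.mul_apply, Fin.sum_univ_three, ha1, hb1, qb3]
    · simp [Matrix.mul_apply, Fin.sum_univ_three, qa1, ha2, hb2]
    · have h02 : (Ψ a * Ψ b) 0 2 = C c * Ψ b 0 2 + Ψ a 0 2 * C c' := by
        simp [Matrix.mul_apply, Fin.sum_univ_three, hc1, ha1, hc2']
      rw [h02]
      refine (Polynomial.degree_add_le _ _).trans (max_le ?_ ?_)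
      · exact (Polynomial.degree_mul_le _ _).trans
          (by simpa using add_le_add Polynomial.degree_C_le hb3)
      · exact (Polynomial.degree_mul_le _ _).trans
          (by simpa using add_le_add ha3 Polynomial.degree_C_le)

lemma swap0 : swapAlg (FreeAlgebra.ι ℂ (0 : Fin 2)) = FreeAlgebra.ι ℂ 1 := by
  simp [swapAlg]

lemma swap1 : swapAlg (FreeAlgebra.ι ℂ (1 : Fin 2)) = FreeAlgebra.ι ℂ 0 := by
  simp [swapAlg]

lemma D0_pow_11 (n : ℕ) : (D0 ^ n) 1 1 = Polynomial.X ^ n := by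
  rw [D0, Matrix.diagonal_pow]
  simp [Matrix.diagonal_apply, Pi.pow_apply]

end NotFGProof

open NotFGProof in
/-- The invariant subalgebra `F^{ℤ/2}` of the free algebra `F = ℂ⟨α, β⟩` under the
ℤ/2-action swapping the generators is not finitely generated as a ℂ-algebra. -/
theorem stmt0 :
    ¬ (AlgHom.equalizer swapAlg (AlgHom.id ℂ (FreeAlgebra ℂ (Fin 2)))).FG := by
  rintro ⟨t, ht⟩
  set D : ℕ := t.sup (fun g => (Ψ g 0 2).natDegree) with hD
  -- every element of the invariant algebra lands in `T D`
  have hsub : Algebra.adjoin ℂ (t : Set F) ≤ T D := by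
    apply Algebra.adjoin_le
    intro g hg
    have hgS : swapAlg g = g := by
      have hmem : g ∈ AlgHom.equalizer swapAlg (AlgHom.id ℂ (FreeAlgebra ℂ (Fin 2))) := by
        rw [← ht]; exact Algebra.subset_adjoin hg
      simpa using (AlgHom.mem_equalizer _ _ g).1 hmem
    have hfix : Ψ g = G * Ψ g * G := by
      have h := swap_comm g
      rwa [hgS] at h
    refine ⟨?_, ?_, ?_⟩
    · have h01 := congrFun (congrFun hfix 0) 1
      rw [GMG01] at h01
      have h2 : Ψ g 0 1 + Ψ g 0 1 = 0 := by nth_rewrite 2 [h01]; exact add_neg_cancel _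
      exact add_self_eq_zero.mp h2
    · have h12 := congrFun (congrFun hfix 1) 2
      rw [GMG12] at h12
      have h2 : Ψ g 1 2 + Ψ g 1 2 = 0 := by nth_rewrite 2 [h12]; exact add_neg_cancel _
      exact add_self_eq_zero.mp h2
    · exact (Polynomial.degree_le_natDegree).trans
        (by exact_mod_cast Finset.le_sup (f := fun g => (Ψ g 0 2).natDegree) hg)
  -- the invariant element of high degree
  set x : FreeAlgebra ℂ (Fin 2) := FreeAlgebra.ι ℂ 0
  set y : FreeAlgebra ℂ (Fin 2) := FreeAlgebra.ι ℂ 1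
  set u : FreeAlgebra ℂ (Fin 2) := (x - y) * (x + y) ^ (D + 1) * (x - y) with hu
  have hu_inv : swapAlg u = u := by
    have e : swapAlg u = (y - x) * (y + x) ^ (D + 1) * (y - x) := by
      simp only [hu, _root_.map_mul, _root_.map_pow, map_sub, _root_.map_add, x, y,
        swap0, swap1]
    rw [e, show y - x = -(x - y) from (neg_sub _ _).symm, add_comm y x,
      neg_mul, mul_neg, neg_mul, neg_neg]
  have huT : u ∈ T D := by
    apply hsub
    rw [ht]
    exact (AlgHom.mem_equalizer _ _ u).2 (by simpa using hu_inv)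
  have hval : Ψ u 0 2 = Polynomial.X ^ (D + 1) := by
    have h1 : Ψ (x - y) = N := by rw [map_sub, Psi0, Psi1, A_sub_B]
    have h2 : Ψ (x + y) = D0 := by rw [_root_.map_add, Psi0, Psi1, A_add_B]
    rw [hu, _root_.map_mul, _root_.map_mul, _root_.map_pow, h1, h2, NMN, D0_pow_11]
  have hdeg := huT.2.2
  rw [hval, Polynomial.degree_X_pow] at hdeg
  have : (D + 1 : ℕ) ≤ D := by exact_mod_cast hdeg
  omega
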